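/- arXiv:math/0303084 — 11 statements merged into one kernel-verified Lean document; each statement's English description precedes it below -/
import Mathlib

section
/- Let A be an n×n matrix with entries in {0,1} (n ≥ 1) such that: (i) any two rows of A are either identical or have disjoint supports (i.e., for all i,k, either A_{ij} = A_{kj} for all j, or there is no j with A_{ij} = A_{kj} = 1); (ii) any two columns of A are either identical or have disjoint supports; and (iii) there is d ≥ 1 such that every row sum and every column sum of A equals d. Then A supports a unitary matrix: there exists a unitary matrix U : Matrix (Fin n) (Fin n) ℂ such that for all i, j, U i j ≠ 0 if and only if A_{ij} = 1. (These hypotheses hold for the adjacency matrix of any Cayley digraph that is a line digraph, by the Richards characterization of line digraphs together with strong connectivity and regularity.) -/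
/-!
Up to permuting rows and columns, the hypotheses say that `A` is a direct sum of all-ones
`d × d` blocks: a row class (rows with equal support) has exactly `d` members and its common
support is a column class. Put a scaled `d × d` Fourier matrix `ψ (r i * c j) / √d` on each
block, where `r` labels the rows of each row class and `c` the columns of each column class
injectively by `ZMod d`. Rows from different classes have disjoint supports, and rows from the
same class are orthogonal by orthogonality of the characters of `ZMod d`.
-/

open Finset
open scoped Matrix

lemma exists_injective_prodMk_of_card_fiber_le {ι β γ : Type*} [Fintype ι] [Fintype β]
    [DecidableEq γ] (f : ι → γ) (hf : ∀ i, #{k | f k = f i} ≤ Fintype.card β) :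
    ∃ r : ι → β, Function.Injective fun i => (f i, r i) := by
  have hfiber (y : γ) : Nonempty ({k // f k = y} ↪ β) := by
    refine Function.Embedding.nonempty_of_card_le ?_
    rw [Fintype.card_subtype]
    by_cases hy : ∃ i, f i = y
    · obtain ⟨i, rfl⟩ := hy
      exact hf i
    · simp_all
  let e (y : γ) := (hfiber y).some
  have he {k : ι} {y : γ} (hk : f k = y) : e y ⟨k, hk⟩ = e (f k) ⟨k, rfl⟩ := by subst hk; rfl
  refine ⟨fun i => e (f i) ⟨i, rfl⟩, fun i k hik => ?_⟩
  obtain ⟨hf, hr⟩ := Prod.mk.inj hik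
  dsimp only at hr
  rw [← he hf.symm] at hr
  exact congrArg Subtype.val ((e (f i)).injective hr)

section RowSupport

variable {ι κ : Type*} [Fintype κ]

def Matrix.rowSupport (A : Matrix ι κ ℕ) (i : ι) : Finset κ := {j | A i j = 1}

variable {A : Matrix ι κ ℕ}

@[simp]
lemma Matrix.mem_rowSupport {i : ι} {j : κ} : j ∈ A.rowSupport i ↔ A i j = 1 := by
  simp [Matrix.rowSupport]

lemma Matrix.card_rowSupport (h01 : ∀ i j, A i j = 0 ∨ A i j = 1) (i : ι) :
    #(A.rowSupport i) = ∑ j, A i j := by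
  rw [Matrix.rowSupport, card_filter]
  refine sum_congr rfl fun j _ => ?_
  rcases h01 i j with h | h <;> simp [h]

lemma Matrix.rowSupport_eq_or_disjoint {i k : ι}
    (h : (∀ j, A i j = A k j) ∨ ¬ ∃ j, A i j = 1 ∧ A k j = 1) :
    A.rowSupport i = A.rowSupport k ∨ Disjoint (A.rowSupport i) (A.rowSupport k) := by
  refine h.imp (fun h => ?_) fun h => disjoint_left.2 fun j hi hk => h ⟨j, ?_, ?_⟩
  · ext j; simp [h j]
  · simpa using hi
  · simpa using hk

lemma Matrix.card_filter_rowSupport_eq_le [Fintype ι] [DecidableEq κ] {d : ℕ}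
    (hcol : ∀ j, #(Aᵀ.rowSupport j) ≤ d) {i : ι} (hi : (A.rowSupport i).Nonempty) :
    #{k | A.rowSupport k = A.rowSupport i} ≤ d := by
  obtain ⟨j, hj⟩ := hi
  refine le_trans (card_le_card fun k hk => ?_) (hcol j)
  rw [mem_filter] at hk
  simpa [← hk.2] using hj

end RowSupport

lemma Set.bijOn_univ_of_injective_prodMk {κ β γ : Type*} [Fintype β] {f : κ → γ} {c : κ → β}
    (hc : Function.Injective fun j => (f j, c j)) {s : Finset κ}
    (hs : ∀ j ∈ s, ∀ l ∈ s, f j = f l) (hcard : Fintype.card β ≤ #s) :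
    Set.BijOn c s Set.univ := by
  have hinj : Set.InjOn c s := fun j hj l hl h => hc (Prod.ext (hs j hj l hl) h)
  refine ⟨Set.mapsTo_univ _ _, hinj, ?_⟩
  simpa using surjOn_of_injOn_of_card_le (t := Finset.univ) c (by simp) hinj
    (by rwa [card_univ])

section FourierBlock

variable {ι κ : Type*} [DecidableEq κ] {d : ℕ} [NeZero d]
  (ψ : AddChar (ZMod d) ℂ) (S : ι → Finset κ) (r : ι → ZMod d) (c : κ → ZMod d)

noncomputable def fourierBlock : Matrix ι κ ℂ :=
  Matrix.of fun i j => if j ∈ S i then ψ (r i * c j) / (Real.sqrt d : ℂ) else 0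

variable {ψ S r c}

lemma fourierBlock_ne_zero_iff {i : ι} {j : κ} : fourierBlock ψ S r c i j ≠ 0 ↔ j ∈ S i := by
  have hψ : ψ (r i * c j) ≠ 0 := by
    rw [← norm_ne_zero_iff, AddChar.norm_apply]; exact one_ne_zero
  have hd : (Real.sqrt d : ℂ) ≠ 0 := by simp [NeZero.ne d]
  by_cases hj : j ∈ S i <;> simp [fourierBlock, hj, hψ, hd]

variable [Fintype κ]

lemma sum_fourierBlock_mul_star_of_eq {i k : ι} (h : S i = S k) :
    ∑ j, fourierBlock ψ S r c i j * star (fourierBlock ψ S r c k j)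
      = ∑ j ∈ S i, ψ ((r i - r k) * c j) / d := by
  have hsqrt : (Real.sqrt d : ℂ) * Real.sqrt d = d := by
    rw [← Complex.ofReal_mul, Real.mul_self_sqrt d.cast_nonneg, Complex.ofReal_natCast]
  have hterm (j : κ) : fourierBlock ψ S r c i j * star (fourierBlock ψ S r c k j)
      = if j ∈ S i then ψ ((r i - r k) * c j) / d else 0 := by
    split_ifs with hj
    · simp only [fourierBlock, Matrix.of_apply, hj, ← h, if_true, star_div₀, Complex.star_def,
        Complex.conj_ofReal, ← AddChar.map_neg_eq_conj, div_mul_div_comm, ← AddChar.map_add_eq_mul,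
        hsqrt]
      ring_nf
    · simp [fourierBlock, hj]
  simp only [hterm, sum_ite_mem, univ_inter]

lemma fourierBlock_mul_conjTranspose [DecidableEq ι] (hψ : ψ.IsPrimitive)
    (hS : ∀ i k, S i = S k ∨ Disjoint (S i) (S k)) (hr : Function.Injective fun i => (S i, r i))
    (hc : ∀ i, Set.BijOn c (S i) Set.univ) :
    fourierBlock ψ S r c * (fourierBlock ψ S r c)ᴴ = 1 := by
  ext i k
  simp only [Matrix.mul_apply, Matrix.conjTranspose_apply, Matrix.one_apply]
  rcases hS i k with h | h
  · have hreindex : ∑ j ∈ S i, ψ ((r i - r k) * c j) = ∑ t, ψ (t * (r i - r k)) :=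
      sum_nbij c (fun _ _ => mem_univ _) (hc i).injOn (by simpa using (hc i).surjOn)
        (fun _ _ => by rw [mul_comm])
    have hik : i = k ↔ r i - r k = 0 := by
      rw [sub_eq_zero, ← hr.eq_iff, Prod.mk.injEq, and_iff_right h]
    rw [sum_fourierBlock_mul_star_of_eq h, ← sum_div, hreindex, AddChar.sum_mulShift _ hψ,
      ZMod.card]
    by_cases hrik : r i - r k = 0 <;> simp [hrik, hik, NeZero.ne d]
  · have hik : i ≠ k := by
      rintro rfl
      obtain ⟨j, hj, -⟩ := (hc i).surjOn (Set.mem_univ 0)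
      exact disjoint_left.mp h hj hj
    rw [if_neg hik]
    refine sum_eq_zero fun j _ => ?_
    by_cases hj : j ∈ S i
    · have hjk : fourierBlock ψ S r c k j = 0 := by
        by_contra hne
        exact disjoint_left.mp h hj (fourierBlock_ne_zero_iff.mp hne)
      rw [hjk, star_zero, mul_zero]
    · rw [not_ne_iff.mp (mt fourierBlock_ne_zero_iff.mp hj), zero_mul]

end FourierBlock

theorem stmt_2_general (n : ℕ) (A : Matrix (Fin n) (Fin n) ℕ)
    (h01 : ∀ i j, A i j = 0 ∨ A i j = 1)
    (hrows : ∀ i k : Fin n, (∀ j, A i j = A k j) ∨ ¬ ∃ j, A i j = 1 ∧ A k j = 1)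
    (hcols : ∀ j l : Fin n, (∀ i, A i j = A i l) ∨ ¬ ∃ i, A i j = 1 ∧ A i l = 1)
    (hreg : ∃ d : ℕ, 1 ≤ d ∧ (∀ i, ∑ j, A i j = d) ∧ (∀ j, ∑ i, A i j = d)) :
    ∃ U : Matrix (Fin n) (Fin n) ℂ, U ∈ Matrix.unitaryGroup (Fin n) ℂ ∧
      ∀ i j, U i j ≠ 0 ↔ A i j = 1 := by
  obtain ⟨d, hd, hrow, hcol⟩ := hreg
  have : NeZero d := ⟨by omega⟩
  have hS_card (i : Fin n) : #(A.rowSupport i) = d := (A.card_rowSupport h01 i).trans (hrow i)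
  have hT_card (j : Fin n) : #(Aᵀ.rowSupport j) = d :=
    (Aᵀ.card_rowSupport (fun j i => h01 i j) j).trans (hcol j)
  have hS_ne (i : Fin n) : (A.rowSupport i).Nonempty := card_pos.1 (by rw [hS_card]; omega)
  have hT_ne (j : Fin n) : (Aᵀ.rowSupport j).Nonempty := card_pos.1 (by rw [hT_card]; omega)
  obtain ⟨r, hr⟩ := exists_injective_prodMk_of_card_fiber_le A.rowSupport
    (β := ZMod d) fun i => by
      simpa using A.card_filter_rowSupport_eq_le (fun j => (hT_card j).le) (hS_ne i)
  obtain ⟨c, hc⟩ := exists_injective_prodMk_of_card_fiber_le Aᵀ.rowSupport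
    (β := ZMod d) fun j => by
      simpa using Aᵀ.card_filter_rowSupport_eq_le (fun i => (hS_card i).le) (hT_ne j)
  have hc_bij (i : Fin n) : Set.BijOn c (A.rowSupport i) Set.univ := by
    refine Set.bijOn_univ_of_injective_prodMk hc (fun j hj l hl => ?_) (by simp [hS_card])
    refine (Aᵀ.rowSupport_eq_or_disjoint (hcols j l)).resolve_right fun h => ?_
    exact disjoint_left.1 h (show i ∈ Aᵀ.rowSupport j by simpa using hj) (by simpa using hl)
  refine ⟨fourierBlock ZMod.stdAddChar A.rowSupport r c, ?_, fun i j => ?_⟩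
  · exact Matrix.mem_unitaryGroup_iff.2 <| fourierBlock_mul_conjTranspose
      (ZMod.isPrimitive_stdAddChar d) (fun i k => A.rowSupport_eq_or_disjoint (hrows i k)) hr hc_bij
  · exact fourierBlock_ne_zero_iff.trans Matrix.mem_rowSupport

/-- A (0,1)-matrix whose rows are pairwise identical-or-support-disjoint, whose columns
are pairwise identical-or-support-disjoint, and which is `d`-regular (all row sums and
column sums equal `d ≥ 1`), supports a unitary matrix. -/
theorem stmt_2 (n : ℕ) (hn : 1 ≤ n) (A : Matrix (Fin n) (Fin n) ℕ)
    (h01 : ∀ i j, A i j = 0 ∨ A i j = 1)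
    (hrows : ∀ i k : Fin n, (∀ j, A i j = A k j) ∨ ¬ ∃ j, A i j = 1 ∧ A k j = 1)
    (hcols : ∀ j l : Fin n, (∀ i, A i j = A i l) ∨ ¬ ∃ i, A i j = 1 ∧ A i l = 1)
    (hreg : ∃ d : ℕ, 1 ≤ d ∧ (∀ i, ∑ j, A i j = d) ∧ (∀ j, ∑ i, A i j = d)) :
    ∃ U : Matrix (Fin n) (Fin n) ℂ, U ∈ Matrix.unitaryGroup (Fin n) ℂ ∧
      ∀ i j, U i j ≠ 0 ↔ A i j = 1 :=
  stmt_2_general n A h01 hrows hcols hreg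
end

section
/- Let U be an n×n unitary complex matrix with symmetric support (U i j ≠ 0 ↔ U j i ≠ 0), and let G be the simple graph with G.Adj i j ↔ (i ≠ j ∧ U i j ≠ 0). If G is connected and has at least 3 vertices, then G has no bridges: no edge of G is a bridge. -/
/-!
If `s(a, b)` were a bridge of the graph of a unitary `U`, then by connectivity and `3 ≤ n` one
endpoint, say `a`, has a neighbour `c ≠ b`. Deleting the bridge separates `c` from `b`, so the
supports of the rows `c` and `b` of `U` (closed neighbourhoods of `c` and `b`) meet only in `a`.
These rows are orthogonal, hence `U c a * star (U b a) = 0`, contradicting `c ~ a ~ b`.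
-/

namespace Matrix

theorem apply_eq_zero_or_apply_eq_zero_of_mem_unitaryGroup {ι R : Type*} [Fintype ι]
    [DecidableEq ι] [CommRing R] [StarRing R] [NoZeroDivisors R] {U : Matrix ι ι R}
    (hU : U ∈ unitaryGroup ι R) {i k a : ι} (hik : i ≠ k)
    (hsupp : ∀ j ≠ a, U i j = 0 ∨ U k j = 0) :
    U i a = 0 ∨ U k a = 0 := by
  have horth : ∑ j, U i j * star (U k j) = 0 := by
    simpa [mul_apply, one_apply_ne hik] using congrFun (congrFun (mem_unitaryGroup_iff.1 hU) i) k
  rw [Finset.sum_eq_single a (fun j _ hja => by rcases hsupp j hja with h | h <;> simp [h])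
    (by simp)] at horth
  simpa using horth

end Matrix

namespace SimpleGraph

variable {V : Type*} {G : SimpleGraph V}

theorem IsBridge.eq_of_common_closed_neighbor {a b c j : V} (hbr : G.IsBridge s(a, b))
    (hac : G.Adj a c) (hcb : c ≠ b) (hcj : c = j ∨ G.Adj c j) (hbj : b = j ∨ G.Adj b j) :
    j = a := by
  by_contra hja
  have hca : c ≠ a := hac.ne.symm
  have hreach : ∀ {x y : V}, (x = y ∨ G.Adj x y) → s(x, y) ≠ s(a, b) →
      (G.deleteEdges {s(a, b)}).Reachable x y := by
    rintro x y (rfl | hxy) hne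
    · rfl
    · exact (deleteEdges_adj.2 ⟨hxy, hne⟩).reachable
  refine isBridge_iff.1 hbr ((hreach (.inr hac) ?_).trans ((hreach hcj ?_).trans
    (hreach hbj ?_).symm)) <;> grind [Sym2.eq_iff]

theorem not_isBridge_of_mem_unitaryGroup {ι R : Type*} [Fintype ι] [DecidableEq ι] [CommRing R]
    [StarRing R] [NoZeroDivisors R] {U : Matrix ι ι R} (hU : U ∈ Matrix.unitaryGroup ι R)
    {G : SimpleGraph ι} (hG : ∀ i j, G.Adj i j ↔ i ≠ j ∧ U i j ≠ 0) {a b c : ι}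
    (hab : G.Adj a b) (hac : G.Adj a c) (hcb : c ≠ b) : ¬ G.IsBridge s(a, b) := by
  have closed_nbhd_of_ne_zero : ∀ {i j}, U i j ≠ 0 → i = j ∨ G.Adj i j := fun {i j} h =>
    or_iff_not_imp_left.2 fun hij => (hG i j).2 ⟨hij, h⟩
  intro hbr
  have hsupp : ∀ j ≠ a, U c j = 0 ∨ U b j = 0 := fun j hja => by
    by_contra! h
    exact hja (hbr.eq_of_common_closed_neighbor hac hcb (closed_nbhd_of_ne_zero h.1)
      (closed_nbhd_of_ne_zero h.2))
  rcases Matrix.apply_eq_zero_or_apply_eq_zero_of_mem_unitaryGroup hU hcb hsupp with h | h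
  · exact ((hG c a).1 hac.symm).2 h
  · exact ((hG b a).1 hab.symm).2 h

end SimpleGraph

theorem stmt_4_general (n : ℕ) (U : Matrix (Fin n) (Fin n) ℂ)
    (hU : U ∈ Matrix.unitaryGroup (Fin n) ℂ)
    (G : SimpleGraph (Fin n)) (hG : ∀ i j, G.Adj i j ↔ i ≠ j ∧ U i j ≠ 0)
    (hconn : G.Connected) (hcard : 3 ≤ n) :
    ∀ e : Sym2 (Fin n), ¬ G.IsBridge e := by
  refine Sym2.ind fun a b hbr => ?_
  have hab : G.Adj a b := hbr.reachable_iff_adj.1 (hconn.preconnected a b)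
  obtain ⟨x, hxa, hxb⟩ := Fin.exists_ne_and_ne_of_two_lt a b hcard
  obtain ⟨d, -, hd, hdx⟩ :=
    (hconn.preconnected a x).some.exists_boundary_dart {a, b} (by simp) (by simp [hxa, hxb])
  simp only [Set.mem_insert_iff, Set.mem_singleton_iff, not_or] at hd hdx
  rcases hd with hda | hdb
  · exact G.not_isBridge_of_mem_unitaryGroup hU hG hab (hda ▸ d.adj) hdx.2 hbr
  · exact G.not_isBridge_of_mem_unitaryGroup hU hG hab.symm (hdb ▸ d.adj) hdx.1
      (Sym2.eq_swap ▸ hbr)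

/-- In the graph of a unitary matrix, if the graph is connected and has at least 3
vertices then it has no bridges (it is 2-edge-connected). -/
theorem stmt_4 (n : ℕ) (U : Matrix (Fin n) (Fin n) ℂ)
    (hU : U ∈ Matrix.unitaryGroup (Fin n) ℂ)
    (hsym : ∀ i j, U i j ≠ 0 ↔ U j i ≠ 0)
    (G : SimpleGraph (Fin n)) (hG : ∀ i j, G.Adj i j ↔ i ≠ j ∧ U i j ≠ 0)
    (hconn : G.Connected) (hcard : 3 ≤ n) :
    ∀ e : Sym2 (Fin n), ¬ G.IsBridge e :=
  stmt_4_general n U hU G hG hconn hcard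
end

section
/- Let U be an n×n unitary complex matrix with symmetric support (U i j ≠ 0 ↔ U j i ≠ 0), and let G be the simple graph with G.Adj i j ↔ (i ≠ j ∧ U i j ≠ 0). If G is connected and has at least 3 vertices, then G has no cut-vertices: for every vertex v, the subgraph of G induced on the complement of {v} is connected. -/
private lemma walk_closed' {V : Type*} {G : SimpleGraph V} {S : Set V}
    (h : ∀ x ∈ S, ∀ y, G.Adj x y → y ∈ S) {x y : V} (w : G.Walk x y) (hx : x ∈ S) :
    y ∈ S := by
  induction w with
  | nil => exact hx
  | cons adj _ ih => exact ih (h _ hx _ adj)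

/-- In the graph of a unitary matrix, if the graph is connected and has at least 3
vertices then it has no cut-vertices: deleting any vertex leaves a connected graph. -/
theorem stmt_5 (n : ℕ) (U : Matrix (Fin n) (Fin n) ℂ)
    (hU : U ∈ Matrix.unitaryGroup (Fin n) ℂ)
    (hsym : ∀ i j, U i j ≠ 0 ↔ U j i ≠ 0)
    (G : SimpleGraph (Fin n)) (hG : ∀ i j, G.Adj i j ↔ i ≠ j ∧ U i j ≠ 0)
    (hconn : G.Connected) (hcard : 3 ≤ n) :
    ∀ v : Fin n, (G.induce ({v}ᶜ : Set (Fin n))).Connected := by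
  intro v
  by_contra hncon
  have hne : Nonempty ({v}ᶜ : Set (Fin n)) := by
    obtain ⟨w, hw⟩ := Fintype.exists_ne_of_one_lt_card (by simp; omega) v
    exact ⟨⟨w, by simp [hw]⟩⟩
  have hpre : ¬ (G.induce ({v}ᶜ : Set (Fin n))).Preconnected :=
    fun hp => hncon ((SimpleGraph.connected_iff _).mpr ⟨hp, hne⟩)
  unfold SimpleGraph.Preconnected at hpre
  push_neg at hpre
  obtain ⟨a, b, hab⟩ := hpre
  -- reachability from `a` inside the induced graph
  set H := G.induce ({v}ᶜ : Set (Fin n)) with hH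
  let reach : Fin n → Prop := fun x => ∃ h : x ∈ ({v}ᶜ : Set (Fin n)), H.Reachable a ⟨x, h⟩
  have hreach_a : reach a.1 := ⟨a.2, by rfl⟩
  have hnreach_b : ¬ reach b.1 := by
    rintro ⟨h, hr⟩
    exact hab (hr.trans (by rfl))
  -- reach is closed under adjacency avoiding v
  have hclosed : ∀ x y, reach x → y ≠ v → G.Adj x y → reach y := by
    rintro x y ⟨hx, hr⟩ hy hadj
    have hy' : y ∈ ({v}ᶜ : Set (Fin n)) := by simpa using hy
    refine ⟨hy', hr.trans (SimpleGraph.Adj.reachable ?_)⟩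
    show (G.induce ({v}ᶜ : Set (Fin n))).Adj ⟨x, hx⟩ ⟨y, hy'⟩
    simpa using hadj
  -- the key orthogonality consequence
  have horth : ∀ x y : Fin n, reach x → ¬ reach y → y ≠ v →
      U v x = 0 ∨ U v y = 0 := by
    intro x y hx hy hyv
    have hxv : x ≠ v := by
      obtain ⟨h, _⟩ := hx
      simpa using h
    have hxy : x ≠ y := fun h => hy (h ▸ hx)
    have h1 : (star U * U) x y = (1 : Matrix (Fin n) (Fin n) ℂ) x y := by
      rw [hU.1]
    rw [Matrix.mul_apply, Matrix.one_apply_ne hxy] at h1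
    have hterm : ∀ i ∈ Finset.univ, i ≠ v → star U x i * U i y = 0 := by
      intro i _ hiv
      rw [Matrix.star_apply]
      by_contra hcon
      have hix : U i x ≠ 0 := fun h => hcon (by simp [h])
      have hiy : U i y ≠ 0 := fun h => hcon (by simp [h])
      -- show reach y, contradiction
      apply hy
      have hixr : reach i := by
        rcases eq_or_ne i x with rfl | hne
        · exact hx
        · exact hclosed x i hx hiv ((hG x i).mpr ⟨hne.symm, (hsym i x).mp hix⟩)
      rcases eq_or_ne i y with rfl | hne
      · exact hixr
      · exact hclosed i y hixr hyv ((hG i y).mpr ⟨hne, hiy⟩)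
    have := Finset.sum_eq_single_of_mem v (Finset.mem_univ v)
      (fun i hi hiv => hterm i hi hiv)
    rw [this] at h1
    rw [Matrix.star_apply] at h1
    rcases mul_eq_zero.mp h1 with h | h
    · left; simpa using h
    · right; exact h
  -- now split on whether v has a nonzero entry toward the reach-side
  by_cases hcase : ∀ x, reach x → U v x = 0
  · -- the reach side is closed under all adjacency; walk from a to v stays in it
    have hSclosed : ∀ x ∈ {x | reach x}, ∀ y, G.Adj x y → y ∈ {x | reach x} := by
      intro x hx y hadj
      rcases eq_or_ne y v with rfl | hyv
      · exfalso
        have h0 : U y x = 0 := hcase x hx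
        have h0' : U x y = 0 := by
          by_contra h
          exact ((hsym x y).mp h) h0
        exact ((hG x y).mp hadj).2 h0'
      · exact hclosed x y hx hyv hadj
    have hv : reach v := walk_closed' hSclosed (hconn.preconnected a.1 v).some hreach_a
    obtain ⟨h, _⟩ := hv
    simp at h
  · push_neg at hcase
    obtain ⟨x₀, hx₀, hx₀v⟩ := hcase
    have hzero : ∀ y, ¬ reach y → y ≠ v → U v y = 0 := by
      intro y hy hyv
      rcases horth x₀ y hx₀ hy hyv with h | h
      · exact absurd h hx₀v
      · exact h
    -- the non-reach side (excluding v) is closed under all adjacency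
    have hTclosed : ∀ x ∈ {x | x ≠ v ∧ ¬ reach x}, ∀ y, G.Adj x y →
        y ∈ {x | x ≠ v ∧ ¬ reach x} := by
      rintro x ⟨hxv, hxr⟩ y hadj
      rcases eq_or_ne y v with rfl | hyv
      · exfalso
        have h0 : U y x = 0 := hzero x hxr hxv
        have h0' : U x y = 0 := by
          by_contra h
          exact ((hsym x y).mp h) h0
        exact ((hG x y).mp hadj).2 h0'
      · refine ⟨hyv, fun hry => hxr ?_⟩
        exact hclosed y x hry hxv hadj.symm
    have hbv : b.1 ≠ v := Set.mem_compl_singleton_iff.mp b.2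
    have hv : v ∈ {x | x ≠ v ∧ ¬ reach x} :=
      walk_closed' hTclosed (hconn.preconnected b.1 v).some ⟨hbv, hnreach_b⟩
    exact hv.1 rfl
end

section
/- Let U be an n×n unitary complex matrix with symmetric support (U i j ≠ 0 ↔ U j i ≠ 0), and let G be the simple graph with G.Adj i j ↔ (i ≠ j ∧ U i j ≠ 0). If G is connected and has at least 3 vertices, then between any two distinct vertices u and v there exist two independent paths: there are paths p and q from u to v in G such that every vertex lying on both p and q is equal to u or to v. -/
/-!
Unitarity rules out cut vertices. If `i` and `j` are distinct neighbours of `w`, the columns `i`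
and `j` of `U` are orthogonal, so the nonzero product `conj (U w i) * U w j` must be cancelled by
another row `k ≠ w` with `U k i ≠ 0 ≠ U k j`; then `i, k, j` is a walk avoiding `w`. Since `G` is
connected, every vertex other than `w` reaches a neighbour of `w` without passing through `w`, so
no vertex separates two others.

In a graph without cut vertices, two independent `u`-`v` paths are then built by Whitney's
induction along a `u`-`v` walk.
-/

theorem Matrix.exists_ne_ne_zero_of_mem_unitaryGroup {ι R : Type*} [Fintype ι] [DecidableEq ι]
    [CommRing R] [StarRing R] [NoZeroDivisors R] {U : Matrix ι ι R}
    (hU : U ∈ Matrix.unitaryGroup ι R) {w i j : ι} (hij : i ≠ j) (hi : U w i ≠ 0)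
    (hj : U w j ≠ 0) : ∃ k ≠ w, U k i ≠ 0 ∧ U k j ≠ 0 := by
  by_contra! hne
  have horth : ∑ k, star (U k i) * U k j = 0 := by
    simpa [Matrix.mul_apply, Matrix.one_apply, hij] using
      congrFun (congrFun (Matrix.mem_unitaryGroup_iff'.mp hU) i) j
  rw [Finset.sum_eq_single_of_mem w (Finset.mem_univ w) fun k _ hkw => ?_] at horth
  · exact mul_ne_zero (star_ne_zero.mpr hi) hj horth
  · by_cases hki : U k i = 0
    · simp [hki]
    · simp [hne k hkw hki]

namespace SimpleGraph

variable {V : Type*} {G : SimpleGraph V}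

def ReachableAvoiding (G : SimpleGraph V) (w a b : V) : Prop :=
  ∃ p : G.Walk a b, w ∉ p.support

namespace ReachableAvoiding

variable {w a b c : V}

theorem refl (ha : a ≠ w) : G.ReachableAvoiding w a a :=
  ⟨.nil, by simpa using ha.symm⟩

theorem symm : G.ReachableAvoiding w a b → G.ReachableAvoiding w b a
  | ⟨p, hp⟩ => ⟨p.reverse, by simpa using hp⟩

theorem trans :
    G.ReachableAvoiding w a b → G.ReachableAvoiding w b c → G.ReachableAvoiding w a c
  | ⟨p, hp⟩, ⟨q, hq⟩ => ⟨p.append q, by simp [Walk.mem_support_append_iff, hp, hq]⟩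

theorem of_adj (h : G.Adj a b) (ha : a ≠ w) (hb : b ≠ w) : G.ReachableAvoiding w a b :=
  ⟨h.toWalk, by simp [ha.symm, hb.symm]⟩

end ReachableAvoiding

theorem Reachable.exists_adj_reachableAvoiding {a w : V} (h : G.Reachable a w) (haw : a ≠ w) :
    ∃ i, G.Adj w i ∧ G.ReachableAvoiding w a i := by
  classical
  obtain ⟨p⟩ := h.symm
  obtain ⟨P, hP⟩ : ∃ P : G.Walk w a, P.IsPath := ⟨p.bypass, p.bypass_isPath⟩
  cases P with
  | nil => exact absurd rfl haw
  | cons hwi Q =>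
    rw [Walk.cons_isPath_iff] at hP
    exact ⟨_, hwi, ⟨Q.reverse, by simpa using hP.2⟩⟩

theorem Connected.reachableAvoiding_of_neighbors (hconn : G.Connected)
    (h : ∀ w i j, G.Adj w i → G.Adj w j → G.ReachableAvoiding w i j)
    {w a b : V} (ha : a ≠ w) (hb : b ≠ w) : G.ReachableAvoiding w a b := by
  obtain ⟨i, hwi, hai⟩ := (hconn.preconnected a w).exists_adj_reachableAvoiding ha
  obtain ⟨j, hwj, hbj⟩ := (hconn.preconnected b w).exists_adj_reachableAvoiding hb
  exact hai.trans ((h w i j hwi hwj).trans hbj.symm)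

theorem reachableAvoiding_of_mem_unitaryGroup {R : Type*} [Fintype V] [DecidableEq V] [CommRing R]
    [StarRing R] [NoZeroDivisors R] {U : Matrix V V R}
    (hU : U ∈ Matrix.unitaryGroup V R) (hsym : ∀ i j, U i j ≠ 0 ↔ U j i ≠ 0)
    (hG : ∀ i j, G.Adj i j ↔ i ≠ j ∧ U i j ≠ 0) {w i j : V}
    (hi : G.Adj w i) (hj : G.Adj w j) : G.ReachableAvoiding w i j := by
  have hentry : ∀ {x y}, x ≠ w → y ≠ w → U x y ≠ 0 → G.ReachableAvoiding w x y := by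
    intro x y hx hy hxy
    obtain rfl | hne := eq_or_ne x y
    · exact .refl hx
    · exact .of_adj ((hG x y).mpr ⟨hne, hxy⟩) hx hy
  obtain rfl | hij := eq_or_ne i j
  · exact .refl hi.ne.symm
  obtain ⟨k, hkw, hki, hkj⟩ := Matrix.exists_ne_ne_zero_of_mem_unitaryGroup hU hij
    ((hG w i).mp hi).2 ((hG w j).mp hj).2
  exact (hentry hi.ne.symm hkw ((hsym k i).mp hki)).trans (hentry hkw hj.ne.symm hkj)

namespace Walk

def Independent {u v : V} (p q : G.Walk u v) : Prop :=
  ∀ y ∈ p.support, y ∈ q.support → y = u ∨ y = v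

theorem Independent.symm {u v : V} {p q : G.Walk u v} (h : p.Independent q) :
    q.Independent p :=
  fun y hq hp => h y hp hq

theorem IsPath.append_of_support_inter {u x v : V} {p : G.Walk u x} {q : G.Walk x v}
    (hp : p.IsPath) (hq : q.IsPath) (hpq : ∀ y ∈ p.support, y ∈ q.support → y = x) :
    (p.append q).IsPath := by
  rw [isPath_def, support_append]
  refine hp.support_nodup.append hq.support_nodup.tail fun y hy hy' => ?_
  have hq' := hq.support_nodup
  rw [← cons_tail_support] at hq'
  exact (List.nodup_cons.mp hq').1 (hpq y hy (List.mem_of_mem_tail hy') ▸ hy')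

theorem IsPath.start_notMem_support_dropUntil [DecidableEq V] {u v x : V} {p : G.Walk u v}
    (hp : p.IsPath) (hx : x ∈ p.support) (hxu : x ≠ u) : u ∉ (p.dropUntil x hx).support := by
  intro hu
  have hnd := (p.take_spec hx).symm ▸ hp
  rw [isPath_def, support_append] at hnd
  have hu' : u ∈ (p.dropUntil x hx).support.tail := by
    rw [← cons_tail_support, List.mem_cons] at hu
    exact hu.resolve_left hxu.symm
  exact List.disjoint_of_nodup_append hnd (start_mem_support _) hu'

theorem exists_prefix_first_mem (S : Set V) :
    ∀ {a b : V} (p : G.Walk a b), b ∈ S → ∃ x ∈ S, ∃ q : G.Walk a x,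
      q.support ⊆ p.support ∧ ∀ y ∈ q.support, y ∈ S → y = x
  | a, _, .nil, hb => ⟨a, hb, .nil, List.Subset.refl _, by simp⟩
  | a, _, .cons h p, hb => by
    by_cases ha : a ∈ S
    · exact ⟨a, ha, .nil, by simp, by simp⟩
    obtain ⟨x, hx, q, hqp, hqS⟩ := exists_prefix_first_mem S p hb
    refine ⟨x, hx, .cons h q, List.cons_subset_cons a hqp, ?_⟩
    rintro y hy hyS
    rcases List.mem_cons.mp (support_cons h q ▸ hy) with rfl | hy
    · exact absurd hyS ha
    · exact hqS y hy hyS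

end Walk

def HasIndependentPaths (G : SimpleGraph V) (u v : V) : Prop :=
  ∃ p q : G.Walk u v, p.IsPath ∧ q.IsPath ∧ p.Independent q

theorem Adj.hasIndependentPaths {u v : V} (h : G.Adj u v) : G.HasIndependentPaths u v :=
  ⟨h.toWalk, h.toWalk, by simp [h.ne], by simp [h.ne], by simp [Walk.Independent]⟩

/-- Two independent paths from `w` to `v` extend to `u ∼ w`: follow a path `R` from `u` until it
first meets them, at `x ≠ w` on `P₁`, then the rest of `P₁`; the other path is `u ∼ w` then `P₂`. -/
theorem Walk.Independent.hasIndependentPaths_of_adj {u w v x : V} {P₁ P₂ : G.Walk w v}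
    (h₁ : P₁.IsPath) (h₂ : P₂.IsPath) (hind : P₁.Independent P₂) (huw : G.Adj u w) (huv : u ≠ v)
    (hx : x ∈ P₁.support) (hxw : x ≠ w) {R : G.Walk u x} (hR : R.IsPath)
    (hfirst : ∀ y ∈ R.support, y ∈ P₁.support ∨ y ∈ P₂.support → y = x) :
    G.HasIndependentPaths u v := by
  classical
  have hxv : x ∈ P₂.support → x = v := fun hx₂ => (hind x hx hx₂).resolve_left hxw
  have hu₂ : u ∉ P₂.support := fun hu₂ => by
    obtain rfl := hfirst u R.start_mem_support (Or.inr hu₂)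
    exact huv (hxv hu₂)
  have hw : w ∉ (P₁.dropUntil x hx).support := h₁.start_notMem_support_dropUntil hx hxw
  refine ⟨R.append (P₁.dropUntil x hx), .cons huw P₂,
    hR.append_of_support_inter (h₁.dropUntil hx) fun y hy hy' =>
      hfirst y hy (Or.inl (P₁.support_dropUntil_subset_support hx hy')),
    Walk.cons_isPath_iff _ _ |>.mpr ⟨h₂, hu₂⟩, ?_⟩
  intro y hy hy'
  rcases List.mem_cons.mp (Walk.support_cons huw P₂ ▸ hy') with rfl | hy₂
  · exact .inl rfl
  right
  rcases Walk.mem_support_append_iff _ _ |>.mp hy with hyR | hyD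
  · obtain rfl := hfirst y hyR (.inr hy₂)
    exact hxv hy₂
  · refine (hind y (P₁.support_dropUntil_subset_support hx hyD) hy₂).resolve_left ?_
    rintro rfl
    exact hw hyD

theorem Reachable.hasIndependentPaths
    (hnocut : ∀ w a b : V, a ≠ w → b ≠ w → G.ReachableAvoiding w a b)
    {u v : V} (h : G.Reachable u v) (huv : u ≠ v) : G.HasIndependentPaths u v := by
  classical
  obtain ⟨P⟩ := h
  induction P with
  | nil => exact absurd rfl huv
  | @cons u w v huw P ih =>
    by_cases hwv : w = v
    · subst hwv
      exact huw.hasIndependentPaths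
    obtain ⟨P₁, P₂, h₁, h₂, hind⟩ := ih hwv
    obtain ⟨Q, hQ⟩ := hnocut w u v huw.ne (Ne.symm hwv)
    obtain ⟨x, hx, R, hRQ, hfirst⟩ :=
      Q.exists_prefix_first_mem {y | y ∈ P₁.support ∨ y ∈ P₂.support} (.inl P₁.end_mem_support)
    have hxw : x ≠ w := by
      rintro rfl
      exact hQ (hRQ R.end_mem_support)
    have hfirst' : ∀ y ∈ R.bypass.support, y ∈ P₁.support ∨ y ∈ P₂.support → y = x :=
      fun y hy => hfirst y (R.support_bypass_subset_support hy)
    rcases hx with hx₁ | hx₂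
    · exact hind.hasIndependentPaths_of_adj h₁ h₂ huw huv hx₁ hxw R.bypass_isPath hfirst'
    · exact hind.symm.hasIndependentPaths_of_adj h₂ h₁ huw huv hx₂ hxw R.bypass_isPath
        fun y hy hy' => hfirst' y hy hy'.symm

end SimpleGraph

theorem stmt_6_general (n : ℕ) (U : Matrix (Fin n) (Fin n) ℂ)
    (hU : U ∈ Matrix.unitaryGroup (Fin n) ℂ)
    (hsym : ∀ i j, U i j ≠ 0 ↔ U j i ≠ 0)
    (G : SimpleGraph (Fin n)) (hG : ∀ i j, G.Adj i j ↔ i ≠ j ∧ U i j ≠ 0)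
    (hconn : G.Connected) :
    ∀ u v : Fin n, u ≠ v →
      ∃ p q : G.Walk u v, p.IsPath ∧ q.IsPath ∧
        ∀ w : Fin n, w ∈ p.support → w ∈ q.support → w = u ∨ w = v := by
  have hnocut : ∀ w a b, a ≠ w → b ≠ w → G.ReachableAvoiding w a b := fun _ _ _ ha hb =>
    hconn.reachableAvoiding_of_neighbors
      (fun _ _ _ => SimpleGraph.reachableAvoiding_of_mem_unitaryGroup hU hsym hG) ha hb
  intro u v huv
  exact (hconn.preconnected u v).hasIndependentPaths hnocut huv

/-- In the graph of a unitary matrix, if the graph is connected and has at least 3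
vertices, then between any two distinct vertices there are two independent paths. -/
theorem stmt_6 (n : ℕ) (U : Matrix (Fin n) (Fin n) ℂ)
    (hU : U ∈ Matrix.unitaryGroup (Fin n) ℂ)
    (hsym : ∀ i j, U i j ≠ 0 ↔ U j i ≠ 0)
    (G : SimpleGraph (Fin n)) (hG : ∀ i j, G.Adj i j ↔ i ≠ j ∧ U i j ≠ 0)
    (hconn : G.Connected) (hcard : 3 ≤ n) :
    ∀ u v : Fin n, u ≠ v →
      ∃ p q : G.Walk u v, p.IsPath ∧ q.IsPath ∧
        ∀ w : Fin n, w ∈ p.support → w ∈ q.support → w = u ∨ w = v :=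
  stmt_6_general n U hU hsym G hG hconn
end

section
/- Let U be an n×n unitary complex matrix with symmetric support (U i j ≠ 0 ↔ U j i ≠ 0), and let G be the simple graph with G.Adj i j ↔ (i ≠ j ∧ U i j ≠ 0). If G is connected and has at least 3 vertices, then for every pair of distinct vertices u and v there exists a cycle in G containing both u and v (a closed walk that is a cycle and whose support contains both u and v). -/
/-!
Unitarity makes distinct nonadjacent rows `i`, `j` of `U` orthogonal, and in
`∑ₖ U i k * conj (U j k)` only common neighbours of `i` and `j` contribute, so such vertices never
have exactly one common neighbour. Hence a walk through a vertex `w` can be rerouted around it: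
`G - w` stays connected. The rest is the classical argument for 2-connected graphs. An edge `uv`
lies on a cycle, since a third vertex `z` is joined to `u` avoiding `v` and to `v` avoiding `u`.
Inductively along a walk `v ~ w ⋯ u`, a cycle `C` through `u` and `w` but not `v` is replaced by
the edge `vw`, the arc of `C` from `w` through `u` to the first vertex `x` of `C` met by a path from
`v` to `u` in `G - w`, and that path back from `x` to `v`.
-/

namespace SimpleGraph

open Walk

variable {V : Type*} {G : SimpleGraph V}

def NoUniqueCommonNeighbor (G : SimpleGraph V) : Prop :=
  ∀ ⦃i j w : V⦄, i ≠ j → ¬G.Adj i j → G.Adj w i → G.Adj w j →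
    ∃ k, k ≠ w ∧ G.Adj k i ∧ G.Adj k j

def PreconnectedMinusVertex (G : SimpleGraph V) : Prop :=
  ∀ w a b : V, a ≠ w → b ≠ w → ∃ p : G.Walk a b, w ∉ p.support

namespace Walk

theorem IsPath.append {u v w : V} {p : G.Walk u v} {q : G.Walk v w} (hp : p.IsPath)
    (hq : q.IsPath) (hpq : ∀ y ∈ p.support, y ∈ q.support → y = v) : (p.append q).IsPath := by
  have hq' := hq.support_nodup
  rw [← q.cons_tail_support, List.nodup_cons] at hq'
  rw [isPath_def, support_append, List.nodup_append]
  refine ⟨hp.support_nodup, hq'.2, fun y hy y' hy' hyy' => ?_⟩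
  subst hyy'
  exact hq'.1 (hpq y hy (List.mem_of_mem_tail hy') ▸ hy')

theorem exists_walk_first_mem {S : Set V} {v u : V} (p : G.Walk v u) (hu : u ∈ S) :
    ∃ x ∈ S, ∃ q : G.Walk v x, q.support ⊆ p.support ∧ ∀ y ∈ q.support, y ∈ S → y = x := by
  induction p with
  | nil => exact ⟨_, hu, nil, List.Subset.refl _, by simp⟩
  | @cons a b c h p ih =>
    by_cases ha : a ∈ S
    · exact ⟨a, ha, nil, by simp, by simp⟩
    obtain ⟨x, hx, q, hqp, hfirst⟩ := ih hu
    refine ⟨x, hx, cons h q, List.cons_subset_cons _ hqp, fun y hy hyS => ?_⟩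
    rcases List.mem_cons.mp (support_cons h q ▸ hy) with rfl | hy
    · exact absurd hyS ha
    · exact hfirst y hy hyS

theorem IsCycle.exists_isPath_mem_support [DecidableEq V] {w x u : V} {C : G.Walk w w}
    (hC : C.IsCycle) (hx : x ∈ C.support) (hxw : x ≠ w) (hu : u ∈ C.support) :
    ∃ B : G.Walk w x, B.IsPath ∧ u ∈ B.support ∧ B.support ⊆ C.support := by
  have hsplit := C.take_spec hx
  rw [← hsplit, mem_support_append_iff] at hu
  rcases hu with hu | hu
  · exact ⟨_, hC.isPath_takeUntil hx, hu, C.support_takeUntil_subset_support hx⟩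
  · have hdrop : (C.dropUntil x hx).IsPath :=
      (hsplit ▸ hC).isPath_of_append_right (not_nil_of_ne hxw.symm)
    refine ⟨(C.dropUntil x hx).reverse, hdrop.reverse, by simpa using hu, ?_⟩
    simpa using C.support_dropUntil_subset_support hx

theorem IsCycle.exists_isCycle_of_ear [DecidableEq V] {u v w x : V} {C : G.Walk w w}
    (hC : C.IsCycle) (hu : u ∈ C.support) (hv : v ∉ C.support) (h : G.Adj v w) (hx : x ∈ C.support)
    {P : G.Walk v x} (hP : P.IsPath) (hwP : w ∉ P.support)
    (hPC : ∀ y ∈ P.support, y ∈ C.support → y = x) :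
    ∃ D : G.Walk v v, D.IsCycle ∧ u ∈ D.support := by
  have hxw : x ≠ w := by
    rintro rfl
    exact hwP P.end_mem_support
  obtain ⟨B, hB, huB, hBC⟩ := hC.exists_isPath_mem_support hx hxw hu
  have hBP : (B.append P.reverse).IsPath :=
    hB.append hP.reverse fun y hyB hyP => hPC y (by simpa using hyP) (hBC hyB)
  refine ⟨cons h (B.append P.reverse), (cons_isCycle_iff _ _).mpr ⟨hBP, fun he => ?_⟩,
    by simp [huB]⟩
  rw [edges_append, List.mem_append, edges_reverse, List.mem_reverse] at he
  rcases he with he | he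
  · exact hv (hBC (B.fst_mem_support_of_mem_edges he))
  · exact hwP (P.snd_mem_support_of_mem_edges he)

end Walk

/-- Allowing the start `a'` to be a neighbour of `a` lets the induction replace a step
`a' ~ w ~ b` by `a' ~ k ~ b` for another common neighbour `k`, or skip `w` when `a'` and `b` are
equal or adjacent. -/
theorem NoUniqueCommonNeighbor.exists_walk_not_mem_support (hG : G.NoUniqueCommonNeighbor)
    {a v w : V} (q : G.Walk a v) (hv : v ≠ w) {a' : V} (ha' : a' ≠ w)
    (h : a' = a ∨ G.Adj a' a) : ∃ p : G.Walk a' v, w ∉ p.support := by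
  induction q generalizing a' with
  | nil =>
    rcases h with rfl | h
    · exact ⟨nil, by simpa using ha'.symm⟩
    · exact ⟨cons h nil, by simp [ha'.symm, hv.symm]⟩
  | @cons a b c hab q ih =>
    by_cases ha : a = w
    · subst ha
      have haw : G.Adj a' a := h.resolve_left ha'
      by_cases hb : a' = b ∨ G.Adj a' b
      · exact ih hv ha' hb
      push Not at hb
      obtain ⟨k, hka, hka', hkb⟩ := hG hb.1 hb.2 haw.symm hab
      obtain ⟨p, hp⟩ := ih hv hka (Or.inr hkb)
      exact ⟨cons hka'.symm p, by simp [hp, ha'.symm]⟩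
    · obtain ⟨p, hp⟩ := ih hv ha (Or.inr hab)
      rcases h with rfl | h
      · exact ⟨p, hp⟩
      · exact ⟨cons h p, by simp [hp, ha'.symm]⟩

theorem NoUniqueCommonNeighbor.preconnectedMinusVertex (hG : G.NoUniqueCommonNeighbor)
    (hconn : G.Preconnected) : G.PreconnectedMinusVertex := fun _ a b ha hb =>
  hG.exists_walk_not_mem_support (hconn a b).some hb ha (Or.inl rfl)

namespace PreconnectedMinusVertex

theorem exists_isCycle_mem_edges (hG : G.PreconnectedMinusVertex) {u v z : V} (h : G.Adj u v)
    (hzu : z ≠ u) (hzv : z ≠ v) : ∃ (c : V) (C : G.Walk c c), C.IsCycle ∧ s(u, v) ∈ C.edges := by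
  obtain ⟨p, hp⟩ := hG v z u hzv h.ne
  obtain ⟨q, hq⟩ := hG u z v hzu h.ne.symm
  refine adj_and_reachable_delete_edges_iff_exists_cycle.mp
    ⟨h, reachable_deleteEdges_iff_exists_walk.mpr ⟨p.reverse.append q, fun he => ?_⟩⟩
  rw [edges_append, List.mem_append, edges_reverse, List.mem_reverse] at he
  rcases he with he | he
  · exact hp (p.snd_mem_support_of_mem_edges he)
  · exact hq (q.fst_mem_support_of_mem_edges he)

theorem exists_isCycle_of_adj [DecidableEq V] (hG : G.PreconnectedMinusVertex) {u v w c : V}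
    {C : G.Walk c c} (hC : C.IsCycle) (hu : u ∈ C.support) (hw : w ∈ C.support) (huw : u ≠ w)
    (hv : v ∉ C.support) (h : G.Adj v w) :
    ∃ (d : V) (D : G.Walk d d), D.IsCycle ∧ u ∈ D.support ∧ v ∈ D.support := by
  set C' := C.rotate w hw
  have hu' : u ∈ C'.support := (C.mem_support_rotate_iff w hw).mpr hu
  have hv' : v ∉ C'.support := fun hvC' => hv ((C.mem_support_rotate_iff w hw).mp hvC')
  obtain ⟨Q, hQ⟩ := hG w v u h.ne huw
  obtain ⟨x, hx, P, hPQ, hPC⟩ := Q.exists_walk_first_mem (S := {y | y ∈ C'.support}) hu'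
  obtain ⟨D, hD, huD⟩ := (hC.rotate hw).exists_isCycle_of_ear hu' hv' h hx P.bypass_isPath
    (fun hwP => hQ (hPQ (P.support_bypass_subset_support hwP)))
    (fun y hy => hPC y (P.support_bypass_subset_support hy))
  exact ⟨v, D, hD, huD, D.start_mem_support⟩

theorem exists_isCycle_mem_support [DecidableEq V] (hG : G.PreconnectedMinusVertex)
    (h3 : ∀ u v : V, ∃ z, z ≠ u ∧ z ≠ v) {u v : V} (p : G.Walk v u) (hvu : v ≠ u) :
    ∃ (c : V) (C : G.Walk c c), C.IsCycle ∧ u ∈ C.support ∧ v ∈ C.support := by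
  induction p with
  | nil => exact absurd rfl hvu
  | @cons v w u h p ih =>
    by_cases hwu : w = u
    · subst hwu
      obtain ⟨z, hzv, hzw⟩ := h3 v w
      obtain ⟨c, C, hC, he⟩ := hG.exists_isCycle_mem_edges h hzv hzw
      exact ⟨c, C, hC, C.snd_mem_support_of_mem_edges he, C.fst_mem_support_of_mem_edges he⟩
    obtain ⟨c, C, hC, huC, hwC⟩ := ih hwu
    by_cases hvC : v ∈ C.support
    · exact ⟨c, C, hC, huC, hvC⟩
    · exact hG.exists_isCycle_of_adj hC huC hwC (Ne.symm hwu) hvC h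

end PreconnectedMinusVertex

end SimpleGraph

theorem Matrix.noUniqueCommonNeighbor_of_mem_unitaryGroup {ι R : Type*} [Fintype ι]
    [DecidableEq ι] [CommRing R] [StarRing R] [NoZeroDivisors R] {U : Matrix ι ι R}
    (hU : U ∈ unitaryGroup ι R) (hsym : ∀ i j, U i j ≠ 0 ↔ U j i ≠ 0) {G : SimpleGraph ι}
    (hG : ∀ i j, G.Adj i j ↔ i ≠ j ∧ U i j ≠ 0) : G.NoUniqueCommonNeighbor := by
  have hadj : ∀ {a b}, a ≠ b → (G.Adj b a ↔ U a b ≠ 0) := fun hab => by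
    rw [hG, hsym]; exact and_iff_right hab.symm
  intro i j w hij hnadj hwi hwj
  by_contra! hk
  have horth : ∑ b, U i b * star (U j b) = 0 := by
    have := congrFun (congrFun (mem_unitaryGroup_iff.mp hU) i) j
    simpa [mul_apply, one_apply_ne hij] using this
  have hsingle : ∑ b, U i b * star (U j b) = U i w * star (U j w) := by
    refine Finset.sum_eq_single w (fun b _ hbw => ?_) (by simp)
    by_contra hne
    obtain ⟨hib, hjb⟩ := mul_ne_zero_iff.mp hne
    rw [star_ne_zero] at hjb
    have hbi : b ≠ i := by
      rintro rfl
      exact hnadj ((hadj hij.symm).mpr hjb)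
    have hbj : b ≠ j := by
      rintro rfl
      exact hnadj ((G.adj_comm _ _).mp ((hadj hij).mpr hib))
    exact hk b hbw ((hadj hbi.symm).mpr hib) ((hadj hbj.symm).mpr hjb)
  have hiw : U i w ≠ 0 := (hadj (G.ne_of_adj hwi).symm).mp hwi
  have hjw : U j w ≠ 0 := (hadj (G.ne_of_adj hwj).symm).mp hwj
  exact mul_ne_zero hiw (star_ne_zero.mpr hjw) (hsingle ▸ horth)

/-- In the graph of a unitary matrix, if the graph is connected and has at least 3
vertices, then any two distinct vertices lie on a common cycle. -/
theorem stmt_7 (n : ℕ) (U : Matrix (Fin n) (Fin n) ℂ)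
    (hU : U ∈ Matrix.unitaryGroup (Fin n) ℂ)
    (hsym : ∀ i j, U i j ≠ 0 ↔ U j i ≠ 0)
    (G : SimpleGraph (Fin n)) (hG : ∀ i j, G.Adj i j ↔ i ≠ j ∧ U i j ≠ 0)
    (hconn : G.Connected) (hcard : 3 ≤ n) :
    ∀ u v : Fin n, u ≠ v →
      ∃ (w : Fin n) (c : G.Walk w w), c.IsCycle ∧ u ∈ c.support ∧ v ∈ c.support := by
  have hG' : G.PreconnectedMinusVertex :=
    (Matrix.noUniqueCommonNeighbor_of_mem_unitaryGroup hU hsym hG).preconnectedMinusVertex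
      hconn.preconnected
  have h3 : ∀ u v : Fin n, ∃ z, z ≠ u ∧ z ≠ v := fun u v => by
    have hlt : ({u, v} : Finset (Fin n)).card < (Finset.univ : Finset (Fin n)).card := by
      rw [Finset.card_univ, Fintype.card_fin]
      exact (Finset.card_le_two).trans_lt hcard
    obtain ⟨z, -, hz⟩ := Finset.exists_mem_notMem_of_card_lt_card hlt
    simp only [Finset.mem_insert, Finset.mem_singleton, not_or] at hz
    exact ⟨z, hz⟩
  intro u v huv
  exact hG'.exists_isCycle_mem_support h3 (hconn.preconnected v u).some huv.symm
end

section
/- Let G be a finite group and S ⊆ G a subset satisfying the complementarity condition: for all s, t ∈ S and all g, h ∈ G, if s * h = t * g then s * g = t * h. If S contains two distinct elements, then the order of G is even. -/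
/-- Proposition 1(3): if `S ⊆ G` satisfies the complementarity condition and contains
two distinct elements, then the order of `G` is even. -/
theorem stmt_9 (G : Type*) [Group G] [Fintype G] (S : Set G)
    (hcomp : ∀ s ∈ S, ∀ t ∈ S, ∀ g h : G, s * h = t * g → s * g = t * h)
    (htwo : ∃ s ∈ S, ∃ t ∈ S, s ≠ t) :
    Even (Fintype.card G) := by
  obtain ⟨s, hs, t, ht, hne⟩ := htwo
  have h := hcomp s hs t ht 1 (s⁻¹ * t) (by group)
  set u := s⁻¹ * t with hu
  have hu1 : u ≠ 1 := by
    intro h1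
    apply hne
    have : s * u = s * 1 := by rw [h1]
    simpa [hu, mul_assoc] using this.symm
  have husq : u ^ 2 = 1 := by
    have : s * 1 = t * u := h
    have ht' : t * u = s := by rw [← this, mul_one]
    rw [hu] at ht' ⊢
    rw [pow_two, mul_assoc, ht', inv_mul_cancel]
  have hord : orderOf u = 2 := orderOf_eq_prime husq hu1
  have hdvd : 2 ∣ Fintype.card G := hord ▸ orderOf_dvd_card
  exact even_iff_two_dvd.mpr hdvd
end

section
/- Let G be a finite abelian group of odd order and S ⊆ G a subset satisfying the complementarity condition: for all s, t ∈ S and all g, h ∈ G, if s * h = t * g then s * g = t * h. Then S has at most one element. -/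
/-- If `G` is a finite abelian group of odd order and `S ⊆ G` satisfies the
complementarity condition, then `S` has at most one element. -/
theorem stmt_11 (G : Type*) [CommGroup G] [Fintype G] (hodd : Odd (Fintype.card G))
    (S : Set G)
    (hcomp : ∀ s ∈ S, ∀ t ∈ S, ∀ g h : G, s * h = t * g → s * g = t * h) :
    S.Subsingleton := by
  intro s hs t ht
  have h1 : s * (s⁻¹ * t) = t * 1 := by group
  have h2 := hcomp s hs t ht 1 (s⁻¹ * t) h1
  have hsq : s * s = t * t := by
    have : s = t * (s⁻¹ * t) := by simpa using h2
    calc s * s = s * (t * (s⁻¹ * t)) := by rw [← this]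
    _ = (s * s⁻¹) * (t * t) := by rw [mul_assoc]; exact congrArg (s * ·) (by rw [← mul_assoc, mul_comm t s⁻¹, mul_assoc])
    _ = 1 * (t * t) := by rw [mul_inv_cancel]
    _ = t * t := by rw [one_mul]
  obtain ⟨m, hm⟩ := hodd
  have hcard : ∀ x : G, x ^ Fintype.card G = 1 := fun x => pow_card_eq_one
  calc s = s ^ (2 * m + 2) := by
        rw [pow_succ, ← hm, hcard, one_mul]
  _ = (s * s) ^ (m + 1) := by rw [← sq, ← pow_mul]; ring_nf
  _ = (t * t) ^ (m + 1) := by rw [hsq]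
  _ = t ^ (2 * m + 2) := by rw [← sq, ← pow_mul]; ring_nf
  _ = t := by rw [pow_succ, ← hm, hcard, one_mul]
end

section
/- For every n ≥ 1, the n-dimensional hypercube Q_n is the digraph of a unitary matrix: there exists a unitary matrix U indexed by the vectors of (ZMod 2)^n (i.e., U : Matrix (Fin n → ZMod 2) (Fin n → ZMod 2) ℂ is unitary) such that for all x, y, U x y ≠ 0 if and only if the Hamming distance between x and y equals 1. (Indeed one can take U = (1/√n)·W for a weighing matrix W of size 2^n and weight n whose support is the adjacency matrix of Q_n.) -/
/-!
Jordan–Wigner construction. For each coordinate `i`, let `γᵢ` be the signed permutation matrix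
sending `x` to `x + eᵢ` with sign `(-1) ^ (∑_{k < i} x k)`. These are symmetric, square to `1`
and pairwise anticommute (the sign picks up a factor `-1` exactly when the other flipped
coordinate lies below `i`), so `W = ∑ᵢ γᵢ` is a symmetric `(-1,0,1)`-matrix with `W * W = n`,
supported on the edges of the cube, and `W / √n` is unitary.
-/

open Finset Matrix

theorem Finset.sum_mul_sum_self_of_anticommute {ι R : Type*} [DecidableEq ι] [Ring R]
    (s : Finset ι) (a : ι → R) (hsq : ∀ i ∈ s, a i * a i = 1)
    (hanti : ∀ i ∈ s, ∀ j ∈ s, i ≠ j → a i * a j = -(a j * a i)) :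
    (∑ i ∈ s, a i) * ∑ i ∈ s, a i = #s := by
  induction s using Finset.induction_on with
  | empty => simp
  | insert i s hi ih =>
    have hcross : a i * ∑ j ∈ s, a j + (∑ j ∈ s, a j) * a i = 0 := by
      rw [Finset.mul_sum, Finset.sum_mul, ← Finset.sum_add_distrib]
      refine Finset.sum_eq_zero fun j hj => ?_
      rw [hanti i (mem_insert_self i s) j (mem_insert_of_mem hj)
        (ne_of_mem_of_not_mem hj hi).symm, neg_add_cancel]
    rw [sum_insert hi, card_insert_of_notMem hi, add_mul, mul_add, mul_add,
      hsq i (mem_insert_self i s),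
      ih (fun j hj => hsq j (mem_insert_of_mem hj))
        (fun j hj k hk => hanti j (mem_insert_of_mem hj) k (mem_insert_of_mem hk)),
      ← add_assoc, add_assoc 1, hcross]
    push_cast
    rw [add_zero, add_comm]

theorem hammingNorm_eq_one_iff {ι : Type*} {β : ι → Type*} [Fintype ι] [DecidableEq ι]
    [∀ i, Zero (β i)] [∀ i, DecidableEq (β i)] {x : ∀ i, β i} :
    hammingNorm x = 1 ↔ ∃ i, ∃ a ≠ 0, x = Pi.single i a := by
  constructor
  · intro h
    obtain ⟨i, hi⟩ := card_eq_one.mp h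
    have hsupp : ∀ k, x k ≠ 0 ↔ k = i := fun k => by
      simpa using congrArg (k ∈ ·) hi
    refine ⟨i, x i, (hsupp i).mpr rfl, funext fun k => ?_⟩
    rcases eq_or_ne k i with rfl | hk
    · simp
    · simpa [hk] using (hsupp k).not.mpr hk
  · rintro ⟨i, a, ha, rfl⟩
    rw [hammingNorm, card_eq_one]
    exact ⟨i, by ext k; by_cases hk : k = i <;> simp [hk, ha]⟩

theorem ZMod.two_hammingDist_eq_one_iff {ι : Type*} [Fintype ι] [DecidableEq ι]
    {x y : ι → ZMod 2} : hammingDist x y = 1 ↔ ∃ i, y = x + Pi.single i 1 := by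
  rw [hammingDist_eq_hammingNorm, hammingNorm_eq_one_iff]
  refine exists_congr fun i => ?_
  have hunit : ∀ a : ZMod 2, a ≠ 0 ↔ a = 1 := by decide
  simp only [hunit, exists_eq_left, neg_add_eq_iff_eq_add]

theorem add_single_add_single {ι : Type*} [DecidableEq ι] (x : ι → ZMod 2) (i : ι) :
    x + Pi.single i 1 + Pi.single i 1 = x := by
  rw [add_assoc, ← Pi.single_add, show (1 + 1 : ZMod 2) = 0 from rfl, Pi.single_zero, add_zero]

theorem eq_add_single_comm {ι : Type*} [DecidableEq ι] {x y : ι → ZMod 2} {i : ι} :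
    y = x + Pi.single i 1 ↔ x = y + Pi.single i 1 := by
  constructor <;> rintro rfl <;> exact (add_single_add_single _ i).symm

section Clifford

variable {ι : Type*} [LinearOrder ι] [LocallyFiniteOrderBot ι]

def cliffordSign (x : ι → ZMod 2) (i : ι) : ℤ := ((-1 : ℤˣ) ^ ∑ k ∈ Iio i, x k : ℤˣ)

theorem cliffordSign_mul_self (x : ι → ZMod 2) (i : ι) :
    cliffordSign x i * cliffordSign x i = 1 := by
  rw [cliffordSign, ← Units.val_mul, Int.units_mul_self, Units.val_one]

theorem cliffordSign_ne_zero (x : ι → ZMod 2) (i : ι) : cliffordSign x i ≠ 0 :=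
  Units.ne_zero _

theorem cliffordSign_add_single (x : ι → ZMod 2) (i j : ι) :
    cliffordSign (x + Pi.single j 1) i = (if j < i then -1 else 1) * cliffordSign x i := by
  simp only [cliffordSign, Pi.add_apply, sum_add_distrib, sum_pi_single', mem_Iio, uzpow_add]
  split_ifs <;> simp

variable [Fintype ι]

variable (ι) in
def cliffordGen (i : ι) : Matrix (ι → ZMod 2) (ι → ZMod 2) ℤ :=
  of fun x y => if y = x + Pi.single i 1 then cliffordSign x i else 0


theorem transpose_cliffordGen (i : ι) : (cliffordGen ι i)ᵀ = cliffordGen ι i := by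
  ext x y
  simp only [transpose_apply, cliffordGen, of_apply]
  by_cases h : x = y + Pi.single i 1
  · rw [if_pos h, if_pos (eq_add_single_comm.mpr h), h, cliffordSign_add_single,
      if_neg (lt_irrefl i), one_mul]
  · rw [if_neg h, if_neg (mt eq_add_single_comm.mp h)]

theorem cliffordGen_mul_apply (i : ι) (M : Matrix (ι → ZMod 2) (ι → ZMod 2) ℤ)
    (x y : ι → ZMod 2) :
    (cliffordGen ι i * M) x y = cliffordSign x i * M (x + Pi.single i 1) y := by
  simp [cliffordGen, mul_apply, ite_mul]

theorem cliffordGen_mul_cliffordGen_apply (i j : ι) (x y : ι → ZMod 2) :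
    (cliffordGen ι i * cliffordGen ι j) x y =
      if y = x + Pi.single i 1 + Pi.single j 1 then
        cliffordSign x i * cliffordSign (x + Pi.single i 1) j else 0 := by
  rw [cliffordGen_mul_apply]
  simp only [cliffordGen, of_apply, mul_ite, mul_zero]

theorem cliffordGen_mul_self (i : ι) : cliffordGen ι i * cliffordGen ι i = 1 := by
  ext x y
  rw [cliffordGen_mul_cliffordGen_apply, add_single_add_single, cliffordSign_add_single, one_apply]
  simp [cliffordSign_mul_self, eq_comm]

theorem cliffordGen_anticommute {i j : ι} (hij : i ≠ j) :
    cliffordGen ι i * cliffordGen ι j = -(cliffordGen ι j * cliffordGen ι i) := by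
  ext x y
  rw [neg_apply, cliffordGen_mul_cliffordGen_apply, cliffordGen_mul_cliffordGen_apply,
    add_right_comm x (Pi.single j 1), cliffordSign_add_single, cliffordSign_add_single]
  by_cases hy : y = x + Pi.single i 1 + Pi.single j 1
  · rcases hij.lt_or_gt with h | h <;> simp [hy, h, h.not_gt] <;> ring
  · simp [hy]

variable (ι) in
def cubeWeighingMatrix : Matrix (ι → ZMod 2) (ι → ZMod 2) ℤ := ∑ i, cliffordGen ι i

theorem transpose_cubeWeighingMatrix : (cubeWeighingMatrix ι)ᵀ = cubeWeighingMatrix ι := by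
  simp only [cubeWeighingMatrix, transpose_sum, transpose_cliffordGen]

theorem cubeWeighingMatrix_mul_self :
    cubeWeighingMatrix ι * cubeWeighingMatrix ι = Fintype.card ι := by
  rw [cubeWeighingMatrix, sum_mul_sum_self_of_anticommute _ _ (fun i _ => cliffordGen_mul_self i)
    (fun _ _ _ _ hij => cliffordGen_anticommute hij), card_univ]

theorem cubeWeighingMatrix_apply_ne_zero_iff (x y : ι → ZMod 2) :
    cubeWeighingMatrix ι x y ≠ 0 ↔ hammingDist x y = 1 := by
  simp only [cubeWeighingMatrix, Matrix.sum_apply, cliffordGen, of_apply,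
    ZMod.two_hammingDist_eq_one_iff]
  constructor
  · intro h
    obtain ⟨i, -, hi⟩ := exists_ne_zero_of_sum_ne_zero h
    exact ⟨i, of_not_not fun hy => hi (if_neg hy)⟩
  · rintro ⟨i, rfl⟩
    rw [sum_eq_single i (fun j _ hji => if_neg ?_) (by simp), if_pos rfl]
    · exact cliffordSign_ne_zero x i
    · intro h
      simpa [hji] using congrFun (add_left_cancel h) i

end Clifford

theorem Matrix.inv_sqrt_smul_map_intCast_mem_unitaryGroup {m : Type*} [Fintype m]
    [DecidableEq m]
    {W : Matrix m m ℤ} {k : ℕ} (hk : k ≠ 0) (hW : W * Wᵀ = k) :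
    ((√k : ℝ) : ℂ)⁻¹ • W.map (Int.cast : ℤ → ℂ) ∈ unitaryGroup m ℂ := by
  have hstar : star (W.map (Int.cast : ℤ → ℂ)) = Wᵀ.map Int.cast := by
    rw [star_eq_conjTranspose, ← conjTranspose_map _ (fun a => by simp),
      conjTranspose_eq_transpose_of_trivial]
  have hmul :
      W.map (Int.cast : ℤ → ℂ) * Wᵀ.map (Int.cast : ℤ → ℂ) = (k : ℂ) • 1 := by
    have := (Matrix.map_mul (L := W) (M := Wᵀ) (f := Int.castRingHom ℂ)).symm
    rw [hW, Matrix.map_natCast (map_zero _), map_natCast, ← smul_one_eq_diagonal] at this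
    exact this
  have hscalar : star ((√k : ℝ) : ℂ)⁻¹ * ((√k : ℝ) : ℂ)⁻¹ * k = 1 := by
    rw [star_inv₀, Complex.star_def, Complex.conj_ofReal, ← mul_inv, ← Complex.ofReal_mul,
      Real.mul_self_sqrt k.cast_nonneg, Complex.ofReal_natCast,
      inv_mul_cancel₀ (by exact_mod_cast hk)]
  rw [mem_unitaryGroup_iff, star_smul, hstar, smul_mul_smul_comm, hmul, smul_smul,
    mul_comm _ (star _), hscalar, one_smul]

/-- The `n`-cube `Q_n` is the digraph of a unitary matrix: there is a unitary matrix
indexed by the vectors of `(ZMod 2)^n` whose `(x,y)` entry is non-zero exactly when the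
Hamming distance between `x` and `y` is `1`. -/
theorem stmt_15 (n : ℕ) (hn : 1 ≤ n) :
    ∃ U : Matrix (Fin n → ZMod 2) (Fin n → ZMod 2) ℂ,
      U ∈ Matrix.unitaryGroup (Fin n → ZMod 2) ℂ ∧
      ∀ x y : Fin n → ZMod 2, U x y ≠ 0 ↔ hammingDist x y = 1 := by
  have hsqrt : ((√n : ℝ) : ℂ)⁻¹ ≠ 0 :=
    inv_ne_zero (Complex.ofReal_ne_zero.mpr (Real.sqrt_ne_zero'.mpr (Nat.cast_pos.mpr hn)))
  refine ⟨((√n : ℝ) : ℂ)⁻¹ • (cubeWeighingMatrix (Fin n)).map (Int.cast : ℤ → ℂ),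
    inv_sqrt_smul_map_intCast_mem_unitaryGroup (by omega) ?_, fun x y => ?_⟩
  · rw [transpose_cubeWeighingMatrix, cubeWeighingMatrix_mul_self, Fintype.card_fin]
  · rw [Matrix.smul_apply, map_apply, smul_eq_mul, mul_ne_zero_iff, Int.cast_ne_zero,
      cubeWeighingMatrix_apply_ne_zero_iff, and_iff_right hsqrt]
end

section
/- Let U be an n×n unitary complex matrix with symmetric support (U i j ≠ 0 ↔ U j i ≠ 0) and with zero diagonal (U i i = 0 for all i). Then there exists a fixed-point-free permutation σ of the index set (σ i ≠ i for all i) such that U i (σ i) ≠ 0 for every i. (In graph language: a loopless graph that supports a unitary matrix has a perfect 2-matching, i.e., a spanning subgraph consisting of vertex-disjoint edges and cycles.) -/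
/-!
A unitary matrix is invertible, so some term `sign σ • ∏ i, U i (σ i)` of the Leibniz expansion of
its determinant is nonzero. Every factor of that term is nonzero, and since the diagonal of `U`
vanishes, `σ` has no fixed point.
-/

open Equiv

namespace Matrix

theorem exists_perm_forall_ne_zero_of_det_ne_zero {n R : Type*} [Fintype n] [DecidableEq n]
    [CommRing R] {A : Matrix n n R} (hA : A.det ≠ 0) :
    ∃ σ : Perm n, ∀ i, A i (σ i) ≠ 0 := by
  rw [← det_transpose, det_apply] at hA
  obtain ⟨σ, -, hσ⟩ := Finset.exists_ne_zero_of_sum_ne_zero hA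
  exact ⟨σ, fun i hi => hσ <| by rw [Finset.prod_eq_zero (Finset.mem_univ i) hi, smul_zero]⟩

end Matrix

theorem stmt_17_general (n : ℕ) (U : Matrix (Fin n) (Fin n) ℂ)
    (hU : U ∈ Matrix.unitaryGroup (Fin n) ℂ)
    (hdiag : ∀ i, U i i = 0) :
    ∃ σ : Equiv.Perm (Fin n), (∀ i, σ i ≠ i) ∧ ∀ i, U i (σ i) ≠ 0 := by
  obtain ⟨σ, hσ⟩ := Matrix.exists_perm_forall_ne_zero_of_det_ne_zero
    (Matrix.det_ne_zero_of_left_inverse (Matrix.mem_unitaryGroup_iff'.mp hU))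
  exact ⟨σ, fun i hi => hσ i (by rw [hi, hdiag]), hσ⟩

/-- Proposition: a loopless graph supporting a unitary matrix has a perfect 2-matching:
there is a fixed-point-free permutation `σ` with `U i (σ i) ≠ 0` for every `i`. -/
theorem stmt_17 (n : ℕ) (U : Matrix (Fin n) (Fin n) ℂ)
    (hU : U ∈ Matrix.unitaryGroup (Fin n) ℂ)
    (hsym : ∀ i j, U i j ≠ 0 ↔ U j i ≠ 0)
    (hdiag : ∀ i, U i i = 0) :
    ∃ σ : Equiv.Perm (Fin n), (∀ i, σ i ≠ i) ∧ ∀ i, U i (σ i) ≠ 0 :=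
  stmt_17_general n U hU hdiag
end

section
/- Let U be an n×n unitary complex matrix. Then for every finite set T of indices, the cardinality of T is at most the cardinality of the set {j : ∃ i ∈ T, U i j ≠ 0}. (In graph language: if a graph D supports a unitary matrix, then |S| ≤ |N(S)| for every set S of vertices, where N(S) is the neighbourhood of S.) -/
/-- Proposition: in the digraph of a unitary matrix, `|T| ≤ |N⁺(T)|` for every set `T`
of vertices. -/
theorem stmt_18 (n : ℕ) (U : Matrix (Fin n) (Fin n) ℂ)
    (hU : U ∈ Matrix.unitaryGroup (Fin n) ℂ) (T : Finset (Fin n)) :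
    T.card ≤ {j : Fin n | ∃ i ∈ T, U i j ≠ 0}.ncard := by
  classical
  set S : Finset (Fin n) := Finset.univ.filter (fun j => ∃ i ∈ T, U i j ≠ 0) with hS
  have hset : {j : Fin n | ∃ i ∈ T, U i j ≠ 0} = ↑S := by
    ext j; simp [hS]
  rw [hset, Set.ncard_coe_finset]
  -- rows of U are linearly independent
  have hunit : IsUnit U := ⟨Unitary.toUnits ⟨U, hU⟩, rfl⟩
  have hrows : LinearIndependent ℂ (fun i : Fin n => U i) :=
    Matrix.linearIndependent_rows_iff_isUnit.2 hunit
  have hT : LinearIndependent ℂ (fun i : T => U i) :=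
    hrows.comp Subtype.val Subtype.val_injective
  -- restriction of rows to S is still linearly independent
  have hv : LinearIndependent ℂ (fun i : T => fun j : S => U i j) := by
    rw [Fintype.linearIndependent_iff] at hT ⊢
    intro g hg
    apply hT g
    funext j
    by_cases hj : j ∈ S
    · have := congrFun hg ⟨j, hj⟩
      simpa using this
    · have hz : ∀ i ∈ T, U i j = 0 := by
        intro i hi
        by_contra h
        exact hj (by simp [hS]; exact ⟨i, hi, h⟩)
      simp only [Finset.sum_apply, Pi.smul_apply, Pi.zero_apply, smul_eq_mul]
      rw [Finset.sum_eq_zero]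
      intro i _
      rw [hz i i.2, mul_zero]
  have := hv.fintype_card_le_finrank
  simpa using this
end

section
/- Let G be a simple graph on a finite nonempty vertex set that is bipartite (2-colorable), and suppose G supports a unitary matrix: there is a unitary complex matrix U indexed by the vertices with U i j ≠ 0 if and only if G.Adj i j. Then G has a perfect matching: there exists a subgraph M of G that is a matching covering every vertex (SimpleGraph.IsPerfectMatching). -/
/-!
Rows of an invertible matrix are linearly independent, and the rows indexed by a vertex set `S`
all live in the coordinate subspace of the neighbourhood `N(S)`, so `|S| ≤ |N(S)|`. Thus a graph
supporting a unitary matrix satisfies Hall's condition, and Hall's theorem for bipartite graphs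
produces the perfect matching.
-/

open Function

theorem LinearIndependent.ncard_le_ncard_biUnion_support {ι n K : Type*} [Ring K]
    [StrongRankCondition K] [Finite n] {v : ι → n → K} (hv : LinearIndependent K v)
    (s : Set ι) : s.ncard ≤ (⋃ i ∈ s, support (v i)).ncard := by
  set T := ⋃ i ∈ s, support (v i)
  obtain hs | hs := s.infinite_or_finite
  · simp [hs.ncard]
  have : Fintype s := hs.fintype
  have : Fintype T := Fintype.ofFinite T
  let W : Submodule K (n → K) := ⨅ j ∉ T, LinearMap.ker (LinearMap.proj j)
  have hspan : Submodule.span K (Set.range (v ∘ Subtype.val : s → n → K)) ≤ W := by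
    rw [Submodule.span_le]
    rintro _ ⟨i, rfl⟩
    simp only [W, SetLike.mem_coe, Submodule.mem_iInf, LinearMap.mem_ker, LinearMap.coe_proj]
    intro j hj
    by_contra h
    exact hj (Set.mem_biUnion i.2 h)
  have hinj : Set.InjOn (LinearMap.funLeft K K (Subtype.val : T → n))
      (Submodule.span K (Set.range (v ∘ Subtype.val : s → n → K))) := by
    intro x hx y hy hxy
    funext j
    by_cases hj : j ∈ T
    · exact congrFun hxy ⟨j, hj⟩
    · have vanish : ∀ z ∈ W, z j = 0 := fun z hz => by
        simp only [W, Submodule.mem_iInf, LinearMap.mem_ker, LinearMap.coe_proj] at hz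
        exact hz j hj
      rw [vanish x (hspan hx), vanish y (hspan hy)]
  have hcard := ((hv.comp _ Subtype.val_injective).map_injOn _ hinj).fintype_card_le_finrank
  rw [Module.finrank_fintype_fun_eq_card] at hcard
  rwa [Set.ncard_eq_toFinset_card', Set.ncard_eq_toFinset_card', Set.toFinset_card,
    Set.toFinset_card]

theorem SimpleGraph.ncard_le_ncard_iUnion_neighborSet_of_linearIndependent {V K : Type*}
    [Finite V] [Ring K] [StrongRankCondition K] {G : SimpleGraph V} {U : Matrix V V K}
    (hU : LinearIndependent K U) (hsupp : ∀ i j, U i j ≠ 0 → G.Adj i j) (s : Set V) :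
    s.ncard ≤ (⋃ x ∈ s, G.neighborSet x).ncard :=
  (hU.ncard_le_ncard_biUnion_support s).trans <| Set.ncard_le_ncard
    (Set.biUnion_mono subset_rfl fun i _ j hj => hsupp i j hj) (Set.toFinite _)

theorem stmt_19_general (V : Type*) [Fintype V] [DecidableEq V]
    (G : SimpleGraph V) (hbip : G.Colorable 2)
    (hsupp : ∃ U : Matrix V V ℂ, U ∈ Matrix.unitaryGroup V ℂ ∧
      ∀ i j, U i j ≠ 0 ↔ G.Adj i j) :
    ∃ M : G.Subgraph, M.IsPerfectMatching := by
  classical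
  obtain ⟨U, hU, hUG⟩ := hsupp
  obtain ⟨p₁, p₂, hG⟩ := SimpleGraph.IsBipartite.exists_isBipartiteWith hbip
  have hrows : LinearIndependent ℂ U :=
    Matrix.linearIndependent_rows_iff_isUnit.2 (Unitary.isUnit_coe (U := ⟨U, hU⟩))
  exact SimpleGraph.exists_isPerfectMatching_of_forall_ncard_le hG
    (SimpleGraph.ncard_le_ncard_iUnion_neighborSet_of_linearIndependent hrows
      fun i j => (hUG i j).1)

/-- Proposition: a bipartite graph that supports a unitary matrix has a perfect
matching. -/
theorem stmt_19 (V : Type*) [Fintype V] [Nonempty V] [DecidableEq V]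
    (G : SimpleGraph V) (hbip : G.Colorable 2)
    (hsupp : ∃ U : Matrix V V ℂ, U ∈ Matrix.unitaryGroup V ℂ ∧
      ∀ i j, U i j ≠ 0 ↔ G.Adj i j) :
    ∃ M : G.Subgraph, M.IsPerfectMatching :=
  stmt_19_general V G hbip hsupp
end
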